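/- Let t be a β-normal λI-term with Fv(t) = {x₁,...,xₙ}, which is η-long of type A in the context Γ = x₁:A₁,...,xₙ:Aₙ, via a typing derivation that never uses the rule (∀e)₂. Then each Aᵢ (1 ≤ i ≤ n) belongs to ∀⁻ and A belongs to ∀⁺. -/
import Mathlib


set_option maxHeartbeats 1000000


/-- Untyped λ-terms in de Bruijn representation. -/
inductive Trm : Type
  | var : ℕ → Trm
  | app : Trm → Trm → Trm
  | lam : Trm → Trm
  deriving DecidableEq

namespace Trm

/-- The set of free variables of a term (as de Bruijn indices). -/
def fv : Trm → Set ℕ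
  | var n => {n}
  | app u v => fv u ∪ fv v
  | lam u => {n | n + 1 ∈ fv u}

/-- A term is closed if it has no free variables. -/
def Closed (t : Trm) : Prop := fv t = ∅

/-- λI-terms: abstraction is allowed only on variables occurring free in the body. -/
inductive IsLI : Trm → Prop
  | var (n : ℕ) : IsLI (var n)
  | app {u v : Trm} : IsLI u → IsLI v → IsLI (app u v)
  | lam {u : Trm} : IsLI u → 0 ∈ fv u → IsLI (lam u)

/-- Lifting of free variables ≥ d. -/
def lift (d : ℕ) : Trm → Trm
  | var n => if n < d then var n else var (n + 1)
  | app u v => app (lift d u) (lift d v)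
  | lam u => lam (lift (d + 1) u)

def liftTimes (k : ℕ) (t : Trm) : Trm := (lift 0)^[k] t

/-- Capture-avoiding substitution of the k-th free variable. -/
def subst : Trm → ℕ → Trm → Trm
  | var n, k, v => if n < k then var n else if n = k then liftTimes k v else var (n - 1)
  | app a b, k, v => app (subst a k v) (subst b k v)
  | lam a, k, v => lam (subst a (k + 1) v)

end Trm

/-- One step of β-reduction. -/
inductive Beta : Trm → Trm → Prop
  | beta {u v : Trm} : Beta (.app (.lam u) v) (u.subst 0 v)
  | appL {u u' v : Trm} : Beta u u' → Beta (.app u v) (.app u' v)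
  | appR {u v v' : Trm} : Beta v v' → Beta (.app u v) (.app u v')
  | lam {u u' : Trm} : Beta u u' → Beta (.lam u) (.lam u')

/-- One step of η-reduction: λx (u)x → u when x ∉ Fv(u). -/
inductive Eta : Trm → Trm → Prop
  | eta (u : Trm) : Eta (.lam (.app (u.lift 0) (.var 0))) u
  | appL {u u' v : Trm} : Eta u u' → Eta (.app u v) (.app u' v)
  | appR {u v v' : Trm} : Eta v v' → Eta (.app u v) (.app u v')
  | lam {u u' : Trm} : Eta u u' → Eta (.lam u) (.lam u')

/-- β-reduction (reflexive-transitive closure). -/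
def BetaStar : Trm → Trm → Prop := Relation.ReflTransGen Beta

/-- βη-reduction (reflexive-transitive closure of the union of β and η). -/
def BetaEtaStar : Trm → Trm → Prop := Relation.ReflTransGen (fun a b => Beta a b ∨ Eta a b)

/-- η-reduction (reflexive-transitive closure). -/
def EtaStar : Trm → Trm → Prop := Relation.ReflTransGen Eta

/-- A term is β-normal iff it contains no β-redex. -/
def BetaNormal (t : Trm) : Prop := ∀ u, ¬ Beta t u

/-- A term is βη-normal iff it contains neither a β-redex nor an η-redex. -/
def BetaEtaNormal (t : Trm) : Prop := ∀ u, ¬ Beta t u ∧ ¬ Eta t u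

/-- A term is strongly normalizable iff every β-reduction sequence from it is finite. -/
def StronglyNormalizable (t : Trm) : Prop :=
  ¬ ∃ f : ℕ → Trm, f 0 = t ∧ ∀ n, Beta (f n) (f (n + 1))

/-- Types of system F in de Bruijn representation. -/
inductive Ty : Type
  | var : ℕ → Ty
  | arr : Ty → Ty → Ty
  | all : Ty → Ty
  deriving DecidableEq

namespace Ty

/-- Free type variables. -/
def tfv : Ty → Set ℕ
  | var n => {n}
  | arr A B => tfv A ∪ tfv B
  | all A => {n | n + 1 ∈ tfv A}

/-- Lifting of free type variables ≥ d. -/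
def tlift (d : ℕ) : Ty → Ty
  | var n => if n < d then var n else var (n + 1)
  | arr A B => arr (tlift d A) (tlift d B)
  | all A => all (tlift (d + 1) A)

def tliftTimes (k : ℕ) (A : Ty) : Ty := (tlift 0)^[k] A

/-- Substitution of the k-th free type variable. -/
def tsubst : Ty → ℕ → Ty → Ty
  | var n, k, G => if n < k then var n else if n = k then tliftTimes k G else var (n - 1)
  | arr A B, k, G => arr (tsubst A k G) (tsubst B k G)
  | all A, k, G => all (tsubst A (k + 1) G)

/-- Proper types: in every subtype ∀X E, the variable X occurs free in E. -/
def Proper : Ty → Prop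
  | var _ => True
  | arr A B => Proper A ∧ Proper B
  | all A => Proper A ∧ 0 ∈ tfv A

/-- Closed types. -/
def ClosedTy (A : Ty) : Prop := tfv A = ∅

end Ty

mutual
  /-- ∀-positive types: every second-order quantifier occurs positively. -/
  inductive PosT : Ty → Prop
    | var (n : ℕ) : PosT (.var n)
    | arr {A B : Ty} : NegT A → PosT B → PosT (.arr A B)
    | all {A : Ty} : PosT A → 0 ∈ Ty.tfv A → PosT (.all A)
  /-- ∀-negative types. -/
  inductive NegT : Ty → Prop
    | var (n : ℕ) : NegT (.var n)
    | arr {A B : Ty} : PosT A → NegT B → NegT (.arr A B)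
end

/-- Typing derivations of system F (restricted to proper types), as explicit trees. -/
inductive Deriv : List Ty → Trm → Ty → Type
  | ax {Γ : List Ty} {n : ℕ} {A : Ty} :
      Γ[n]? = some A → (∀ B ∈ Γ, B.Proper) → Deriv Γ (.var n) A
  | arrI {Γ : List Ty} {A B : Ty} {t : Trm} :
      A.Proper → Deriv (A :: Γ) t B → Deriv Γ (.lam t) (.arr A B)
  | arrE {Γ : List Ty} {A B : Ty} {u v : Trm} :
      Deriv Γ u (.arr A B) → Deriv Γ v A → Deriv Γ (.app u v) B
  | allI {Γ : List Ty} {A : Ty} {t : Trm} :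
      0 ∈ Ty.tfv A → Deriv (Γ.map (Ty.tlift 0)) t A → Deriv Γ t (.all A)
  | allE {Γ : List Ty} {A : Ty} {t : Trm} (G : Ty) :
      G.Proper → 0 ∈ Ty.tfv A → Deriv Γ t (.all A) → Deriv Γ t (A.tsubst 0 G)

/-- A term of the form (x)t₁...tₙ whose head is a variable. -/
def isHeadVar : Trm → Prop
  | .var _ => True
  | .app u _ => isHeadVar u
  | .lam _ => False

/-- A derivation uses the rule (∀e)₂ iff some (∀e) node in it has a subject term
of the form (x)t₁...tₙ with head a variable. -/
inductive UsesAllE2 : ∀ {Γ : List Ty} {t : Trm} {A : Ty}, Deriv Γ t A → Prop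
  | arrI {Γ : List Ty} {A B : Ty} {t : Trm} (h : Ty.Proper A) (d : Deriv (A :: Γ) t B) :
      UsesAllE2 d → UsesAllE2 (Deriv.arrI h d)
  | arrEL {Γ : List Ty} {A B : Ty} {u v : Trm} (d : Deriv Γ u (.arr A B)) (e : Deriv Γ v A) :
      UsesAllE2 d → UsesAllE2 (Deriv.arrE d e)
  | arrER {Γ : List Ty} {A B : Ty} {u v : Trm} (d : Deriv Γ u (.arr A B)) (e : Deriv Γ v A) :
      UsesAllE2 e → UsesAllE2 (Deriv.arrE d e)
  | allI {Γ : List Ty} {A : Ty} {t : Trm} (h : 0 ∈ Ty.tfv A) (d : Deriv (List.map (Ty.tlift 0) Γ) t A) :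
      UsesAllE2 d → UsesAllE2 (Deriv.allI h d)
  | allE_self {Γ : List Ty} {A : Ty} {t : Trm} (G : Ty) (hG : G.Proper) (hA : 0 ∈ Ty.tfv A)
      (d : Deriv Γ t (.all A)) : isHeadVar t → UsesAllE2 (Deriv.allE G hG hA d)
  | allE_rec {Γ : List Ty} {A : Ty} {t : Trm} (G : Ty) (hG : G.Proper) (hA : 0 ∈ Ty.tfv A)
      (d : Deriv Γ t (.all A)) : UsesAllE2 d → UsesAllE2 (Deriv.allE G hG hA d)

mutual
  /-- A derivation is η-long: all essential subterms of the (β-normal) subject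
  are typed by type variables in the derivation. -/
  inductive EP : ∀ {Γ : List Ty} {t : Trm} {A : Ty}, Deriv Γ t A → Prop
    | arrI {Γ : List Ty} {A B : Ty} {t : Trm} (h : Ty.Proper A) (d : Deriv (A :: Γ) t B) :
        EP d → EP (Deriv.arrI h d)
    | allI {Γ : List Ty} {A : Ty} {t : Trm} (h : 0 ∈ Ty.tfv A) (d : Deriv (List.map (Ty.tlift 0) Γ) t A) :
        EP d → EP (Deriv.allI h d)
    | head {Γ : List Ty} {t : Trm} {X : ℕ} (d : Deriv Γ t (Ty.var X)) : HP d → EP d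
  /-- Auxiliary predicate for the head part (x)t₁...tₘ of an η-long derivation. -/
  inductive HP : ∀ {Γ : List Ty} {t : Trm} {A : Ty}, Deriv Γ t A → Prop
    | ax {Γ : List Ty} {n : ℕ} {A : Ty} (h₁ : Γ[n]? = some A) (h₂ : ∀ B ∈ Γ, B.Proper) :
        HP (Deriv.ax h₁ h₂)
    | arrE {Γ : List Ty} {A B : Ty} {u v : Trm} (d : Deriv Γ u (.arr A B)) (e : Deriv Γ v A) :
        HP d → EP e → HP (Deriv.arrE d e)
    | allE {Γ : List Ty} {A : Ty} {t : Trm} (G : Ty) (hG : G.Proper) (hA : 0 ∈ Ty.tfv A)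
        (d : Deriv Γ t (.all A)) : HP d → HP (Deriv.allE G hG hA d)
end

/-- t is an η-long term of type A in the context Γ. -/
def EtaLong (Γ : List Ty) (t : Trm) (A : Ty) : Prop := ∃ d : Deriv Γ t A, EP d

namespace Stmt12Aux

lemma tfv_tlift (A : Ty) : ∀ d n, n < d → (n ∈ Ty.tfv (Ty.tlift d A) ↔ n ∈ Ty.tfv A) := by
  induction A with
  | var m =>
    intro d n hn
    simp only [Ty.tlift]
    split <;> simp [Ty.tfv] <;> omega
  | arr A B ihA ihB =>
    intro d n hn
    simp only [Ty.tlift, Ty.tfv, Set.mem_union, ihA d n hn, ihB d n hn]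
  | all A ih =>
    intro d n hn
    simp only [Ty.tlift, Ty.tfv, Set.mem_setOf_eq]
    exact ih (d + 1) (n + 1) (by omega)

lemma pos_neg_tlift : ∀ (B : Ty) (d : ℕ),
    (PosT (Ty.tlift d B) → PosT B) ∧ (NegT (Ty.tlift d B) → NegT B) := by
  intro B
  induction B with
  | var n =>
    intro d
    constructor <;> intro _ <;> constructor
  | arr A B ihA ihB =>
    intro d
    constructor
    · intro h
      simp only [Ty.tlift] at h
      cases h with
      | arr hA hB => exact PosT.arr ((ihA d).2 hA) ((ihB d).1 hB)
    · intro h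
      simp only [Ty.tlift] at h
      cases h with
      | arr hA hB => exact NegT.arr ((ihA d).1 hA) ((ihB d).2 hB)
  | all A ih =>
    intro d
    constructor
    · intro h
      simp only [Ty.tlift] at h
      cases h with
      | all hA h0 =>
        exact PosT.all ((ih (d + 1)).1 hA) ((tfv_tlift A (d + 1) 0 (by omega)).1 h0)
    · intro h
      simp only [Ty.tlift] at h
      cases h

lemma main : ∀ {Γ : List Ty} {t : Trm} {A : Ty} {d : Deriv Γ t A}, EP d →
    ¬ UsesAllE2 d → Trm.IsLI t →
      PosT A ∧ ∀ n ∈ Trm.fv t, ∀ B, Γ[n]? = some B → NegT B := by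
  intro Γ t A d hep
  refine EP.rec
    (motive_1 := fun {Γ t A} d _ => ¬ UsesAllE2 d → Trm.IsLI t →
      PosT A ∧ ∀ n ∈ Trm.fv t, ∀ B, Γ[n]? = some B → NegT B)
    (motive_2 := fun {Γ t A} d _ => isHeadVar t ∧ (¬ UsesAllE2 d → Trm.IsLI t → NegT A →
      ∀ n ∈ Trm.fv t, ∀ B, Γ[n]? = some B → NegT B))
    ?_ ?_ ?_ ?_ ?_ ?_ hep
  · -- arrI
    intro Γ C B u hC d _ ih hU hli
    have hU' : ¬ UsesAllE2 d := fun h => hU (UsesAllE2.arrI hC d h)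
    cases hli with
    | lam hliu h0 =>
      obtain ⟨hpos, hctx⟩ := ih hU' hliu
      have hnegC : NegT C := hctx 0 h0 C (by simp)
      refine ⟨PosT.arr hnegC hpos, ?_⟩
      intro n hn B hB
      have hn' : n + 1 ∈ Trm.fv u := hn
      exact hctx (n + 1) hn' B (by simpa using hB)
  · -- allI
    intro Γ A t h0 d _ ih hU hli
    have hU' : ¬ UsesAllE2 d := fun h => hU (UsesAllE2.allI h0 d h)
    obtain ⟨hpos, hctx⟩ := ih hU' hli
    refine ⟨PosT.all hpos h0, ?_⟩
    intro n hn B hB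
    have hB' : (Γ.map (Ty.tlift 0))[n]? = some (Ty.tlift 0 B) := by
      simp [List.getElem?_map, hB]
    exact (pos_neg_tlift B 0).2 (hctx n hn (Ty.tlift 0 B) hB')
  · -- head
    intro Γ t X d _ ih hU hli
    exact ⟨PosT.var _, ih.2 hU hli (NegT.var _)⟩
  · -- ax
    intro Γ m A h1 h2
    refine ⟨trivial, ?_⟩
    intro _ _ hneg n hn B hB
    have : n = m := by simpa [Trm.fv] using hn
    subst this
    rw [h1] at hB
    cases hB
    exact hneg
  · -- arrE
    intro Γ C A u v d e _ _ ihd ihe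
    refine ⟨ihd.1, ?_⟩
    intro hU hli hneg
    have hUd : ¬ UsesAllE2 d := fun h => hU (UsesAllE2.arrEL d e h)
    have hUe : ¬ UsesAllE2 e := fun h => hU (UsesAllE2.arrER d e h)
    cases hli with
    | app hliu hliv =>
      obtain ⟨hposC, hctxv⟩ := ihe hUe hliv
      have hctxu := ihd.2 hUd hliu (NegT.arr hposC hneg)
      intro n hn B hB
      rcases hn with hn | hn
      · exact hctxu n hn B hB
      · exact hctxv n hn B hB
  · -- allE
    intro Γ A t G hG hA d _ ih
    refine ⟨ih.1, ?_⟩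
    intro hU _ _
    exact absurd (UsesAllE2.allE_self G hG hA d ih.1) hU

end Stmt12Aux

/-- if a β-normal λI-term t with Fv(t) = {x₁,...,xₙ} is η-long of type
A in the context x₁:A₁,...,xₙ:Aₙ via a derivation never using (∀e)₂, then every Aᵢ is
∀-negative and A is ∀-positive. -/
theorem stmt12 (Γ : List Ty) (t : Trm) (A : Ty) (ht : Trm.IsLI t)
    (hn : BetaNormal t) (hfv : Trm.fv t = {m | m < Γ.length})
    (d : Deriv Γ t A) (hlong : EP d) (h2 : ¬ UsesAllE2 d) :
    (∀ B ∈ Γ, NegT B) ∧ PosT A := by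
  obtain ⟨hpos, hctx⟩ := Stmt12Aux.main hlong h2 ht
  refine ⟨?_, hpos⟩
  intro B hB
  obtain ⟨n, hn, rfl⟩ := List.mem_iff_getElem.mp hB
  have hmem : n ∈ Trm.fv t := by
    rw [hfv]; exact hn
  exact hctx n hmem _ (List.getElem?_eq_getElem hn)
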